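/- arXiv:nlin/0610006 — 4 statements merged into one kernel-verified Lean document; each statement's English description precedes it below -/
import Mathlib

section
/- For the FPU chain with fixed boundary conditions and normal mode frequencies ω_j = 2 sin(jπ/(2N+2)) for 1 ≤ j ≤ N, any two distinct frequencies are rationally independent in the following weak sense: for every rational k and indices j ≠ l, one has k·ω_j + ω_l ≠ 0. -/
open Real

section Helpers

open Polynomial Finset

private lemma prod_comp_surj {G H M : Type*} [Group G] [Group H] [Fintype G] [Fintype H]
    [DecidableEq H] [CommMonoid M] (f : G →* H) (hf : Function.Surjective f) (F : H → M) :
    ∃ K : ℕ, Fintype.card G = K * Fintype.card H ∧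
      ∏ u : G, F (f u) = (∏ v : H, F v) ^ K := by
  set K := (Finset.univ.filter (fun u : G => f u = 1)).card with hK
  have hfib : ∀ v : H, (Finset.univ.filter (fun u : G => f u = v)).card = K := by
    intro v
    obtain ⟨u0, hu0⟩ := hf v
    rw [hK]
    apply Finset.card_bij' (fun u _ => u * u0⁻¹) (fun w _ => w * u0)
    · intro a ha
      simp only [mem_filter, mem_univ, true_and] at ha ⊢
      simp [map_mul, ha, hu0]
    · intro a ha
      simp only [mem_filter, mem_univ, true_and] at ha ⊢
      simp [map_mul, ha, hu0]
    · intro a _; simp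
    · intro a _; simp
  refine ⟨K, ?_, ?_⟩
  · have h2 := Finset.card_eq_sum_card_fiberwise
      (f := fun u : G => f u) (s := Finset.univ) (t := Finset.univ) (fun x _ => mem_univ _)
    rw [Finset.sum_congr rfl (fun v _ => hfib v), Finset.sum_const, Finset.card_univ,
      smul_eq_mul, mul_comm] at h2
    simpa [Finset.card_univ] using h2
  · rw [← Finset.prod_fiberwise Finset.univ (fun u : G => f u) (fun u => F (f u)),
      ← Finset.prod_pow]
    apply Finset.prod_congr rfl
    intro v _
    have hcongr : ∀ u ∈ Finset.univ.filter (fun u : G => f u = v), F (f u) = F v := by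
      intro u hu
      simp only [mem_filter] at hu
      rw [hu.2]
    rw [Finset.prod_congr rfl hcongr, Finset.prod_const, hfib v]

private lemma prod_units_one_sub {d : ℕ} [NeZero d] {ξ : ℂ} (hξ : IsPrimitiveRoot ξ d) :
    ∏ v : (ZMod d)ˣ, (1 - ξ ^ (v : ZMod d).val) = (cyclotomic d ℂ).eval 1 := by
  have hd : 0 < d := Nat.pos_of_ne_zero (NeZero.ne d)
  rw [cyclotomic_eq_prod_X_sub_primitiveRoots hξ, eval_prod]
  simp only [eval_sub, eval_X, eval_C]
  have hinj : Function.Injective (fun v : (ZMod d)ˣ => ξ ^ (v : ZMod d).val) := by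
    intro v w hvw
    have := hξ.pow_inj (ZMod.val_lt _) (ZMod.val_lt _) hvw
    exact Units.ext (ZMod.val_injective d this)
  have himg : Finset.univ.image (fun v : (ZMod d)ˣ => ξ ^ (v : ZMod d).val)
      = primitiveRoots d ℂ := by
    apply Finset.eq_of_subset_of_card_le
    · intro x hx
      simp only [Finset.mem_image, mem_univ, true_and] at hx
      obtain ⟨v, rfl⟩ := hx
      rw [mem_primitiveRoots hd]
      exact hξ.pow_of_coprime _ (ZMod.val_coe_unit_coprime v)
    · rw [Complex.card_primitiveRoots, Finset.card_image_of_injective _ hinj,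
        Finset.card_univ, ZMod.card_units_eq_totient]
  rw [← himg, Finset.prod_image (fun a _ b _ h => hinj h)]

private lemma key_prod (n a : ℕ) [NeZero n] (ha : a ≠ 0) {ζ : ℂ} (hζ : IsPrimitiveRoot ζ n) :
    ∃ e : ℕ, n.totient = e * (n / n.gcd a).totient ∧
      ∏ u : (ZMod n)ˣ, (1 - ζ ^ (a * (u : ZMod n).val)) =
        ((cyclotomic (n / n.gcd a) ℂ).eval 1) ^ e := by
  have hn : 0 < n := Nat.pos_of_ne_zero (NeZero.ne n)
  set d := n / n.gcd a with hd
  have hgd : n.gcd a ∣ n := Nat.gcd_dvd_left n a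
  have hdvd : d ∣ n := Nat.div_dvd_of_dvd hgd
  have hdpos : 0 < d := Nat.div_pos (Nat.le_of_dvd hn hgd) (Nat.gcd_pos_of_pos_left a hn)
  haveI : NeZero d := ⟨hdpos.ne'⟩
  set ξ : ℂ := ζ ^ a with hxi
  have hord : orderOf ξ = d := by
    rw [hxi, orderOf_pow' ζ ha, ← hζ.eq_orderOf]
  have hξ : IsPrimitiveRoot ξ d := hord ▸ IsPrimitiveRoot.orderOf ξ
  have hξd : ξ ^ d = 1 := hξ.pow_eq_one
  have hval : ∀ u : (ZMod n)ˣ, ζ ^ (a * (u : ZMod n).val)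
      = ξ ^ ((ZMod.unitsMap hdvd u : ZMod d)).val := by
    intro u
    have h1 : (ZMod.unitsMap hdvd u : ZMod d) = (((u : ZMod n).val : ℕ) : ZMod d) := by
      rw [ZMod.unitsMap_def]
      simp [ZMod.castHom_apply, ZMod.natCast_val]
    rw [h1, ZMod.val_natCast]
    rw [pow_mul, ← hxi]
    conv_lhs => rw [← Nat.div_add_mod ((u : ZMod n).val) d]
    rw [pow_add, pow_mul, hξd, one_pow, one_mul]
  obtain ⟨K, hK1, hK2⟩ := prod_comp_surj (ZMod.unitsMap hdvd)
    (ZMod.unitsMap_surjective hdvd) (fun v : (ZMod d)ˣ => 1 - ξ ^ (v : ZMod d).val)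
  refine ⟨K, ?_, ?_⟩
  · rw [ZMod.card_units_eq_totient, ZMod.card_units_eq_totient] at hK1
    exact hK1
  · rw [Finset.prod_congr rfl (fun u _ => by rw [hval u]), hK2,
      prod_units_one_sub hξ]

private lemma exp_I_sub_exp_neg_I (x : ℝ) :
    Complex.exp ((x : ℂ) * Complex.I) - Complex.exp (-(x : ℂ) * Complex.I)
      = ((2 * Real.sin x : ℝ) : ℂ) * Complex.I := by
  rw [Complex.exp_mul_I, Complex.exp_mul_I, Complex.cos_neg, Complex.sin_neg]
  push_cast [Complex.ofReal_sin]
  ring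

private lemma pow_sub_pow_eq (n : ℕ) (hn : n ≠ 0) (a : ℕ) (ha : a ≤ n) :
    Complex.exp (2 * ↑Real.pi * Complex.I / ↑n) ^ a
      - Complex.exp (2 * ↑Real.pi * Complex.I / ↑n) ^ (n - a)
      = ((2 * Real.sin (2 * Real.pi * a / n) : ℝ) : ℂ) * Complex.I := by
  have hnC : (n : ℂ) ≠ 0 := Nat.cast_ne_zero.mpr hn
  have hnR : (n : ℝ) ≠ 0 := Nat.cast_ne_zero.mpr hn
  have hx : ∀ b : ℕ, Complex.exp (2 * ↑Real.pi * Complex.I / ↑n) ^ b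
      = Complex.exp (((2 * Real.pi * b / n : ℝ) : ℂ) * Complex.I) := by
    intro b
    rw [← Complex.exp_nat_mul]
    congr 1
    push_cast
    field_simp
  rw [hx, hx]
  have h2 : Complex.exp (((2 * Real.pi * (n - a : ℕ) / n : ℝ) : ℂ) * Complex.I)
      = Complex.exp (-((2 * Real.pi * a / n : ℝ) : ℂ) * Complex.I) := by
    rw [Complex.exp_eq_exp_iff_exists_int]
    refine ⟨1, ?_⟩
    push_cast [Nat.cast_sub ha]
    field_simp
    ring
  rw [h2, exp_I_sub_exp_neg_I]

private lemma abs_trick {ζ : ℂ} (hζ0 : ζ ≠ 0) (habs : ‖ζ‖ = 1) {n : ℕ}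
    (hζn : ζ ^ n = 1) (a c : ℕ) (ha : a ≤ n) :
    ‖ζ ^ (a * c) - ζ ^ ((n - a) * c)‖ = ‖1 - ζ ^ (2 * a * c)‖ := by
  set x : ℂ := ζ ^ (a * c) with hxdef
  have hx0 : x ≠ 0 := pow_ne_zero _ hζ0
  have hmul : ζ ^ ((n - a) * c) * x = 1 := by
    rw [hxdef, ← pow_add, ← add_mul, Nat.sub_add_cancel ha, pow_mul, hζn, one_pow]
  have hinv : ζ ^ ((n - a) * c) = x⁻¹ := eq_inv_of_mul_eq_one_left hmul
  have hxabs : ‖x‖ = 1 := by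
    rw [hxdef, norm_pow, habs, one_pow]
  have hsplit : x - x⁻¹ = x⁻¹ * (x ^ 2 - 1) := by
    field_simp
  have hx2 : x ^ 2 = ζ ^ (2 * a * c) := by
    rw [hxdef, ← pow_mul]
    congr 1
    ring
  rw [hinv, hsplit, norm_mul, norm_inv, hxabs, inv_one, one_mul, hx2,
    norm_sub_rev]

private lemma cyclo_eval_one_cases (d : ℕ) (hd : 3 ≤ d) :
    ∃ P : ℕ, (cyclotomic d ℂ).eval 1 = (P : ℂ) ∧ (P = 1 ∨ P.Prime) := by
  by_cases h : IsPrimePow d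
  · obtain ⟨p, k, hp, hk, hpk⟩ := h
    haveI : Fact p.Prime := ⟨hp.nat_prime⟩
    refine ⟨p, ?_, Or.inr hp.nat_prime⟩
    have hdk : d = p ^ ((k - 1) + 1) := by rw [← hpk]; congr 1; omega
    rw [hdk, eval_one_cyclotomic_prime_pow]
  · refine ⟨1, ?_, Or.inl rfl⟩
    rw [eval_one_cyclotomic_not_prime_pow ?_]
    · simp
    · intro p hp k hpk
      apply h
      rcases k with _ | k
      · simp at hpk; omega
      · exact ⟨p, k + 1, hp.prime, Nat.succ_pos k, hpk⟩

private lemma totient_ge_two (d : ℕ) (hd : 3 ≤ d) : 2 ≤ d.totient := by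
  have h1 : d.totient ≠ 1 := fun h => by
    rcases Nat.totient_eq_one_iff.mp h with h' | h' <;> omega
  have h2 : 0 < d.totient := Nat.totient_pos.mpr (by omega)
  omega

private lemma finish_nt (φ p q A Pl el tl : ℕ) (hφ : 0 < φ) (hp2 : 2 ≤ p)
    (hcop : p.Coprime q) (heq : p ^ φ * A = q ^ φ * Pl ^ el)
    (hPl : Pl = 1 ∨ Pl.Prime) (hel : φ = el * tl) (htl : 2 ≤ tl) : False := by
  have hdvd : p ^ φ ∣ Pl ^ el := by
    have h1 : p ^ φ ∣ q ^ φ * Pl ^ el := heq ▸ Dvd.intro A rfl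
    exact Nat.Coprime.dvd_of_dvd_mul_left (hcop.pow φ φ) h1
  rcases hPl with rfl | hPl
  · rw [one_pow] at hdvd
    have hple : p ^ φ = 1 := Nat.dvd_one.mp hdvd
    have : p ≤ 1 := Nat.le_of_dvd one_pos (dvd_trans (dvd_pow_self p hφ.ne') (hple ▸ dvd_refl _))
    omega
  · have hminfac : p.minFac = Pl := by
      have h1 : p.minFac ∣ Pl ^ el :=
        dvd_trans (dvd_trans (Nat.minFac_dvd p) (dvd_pow_self p hφ.ne')) hdvd
      have h2 := (Nat.minFac_prime (by omega : p ≠ 1)).dvd_of_dvd_pow h1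
      exact (Nat.prime_dvd_prime_iff_eq (Nat.minFac_prime (by omega)) hPl).mp h2
    have hPldvd : Pl ∣ p := hminfac ▸ Nat.minFac_dvd p
    have h3 : Pl ^ φ ∣ Pl ^ el :=
      dvd_trans (pow_dvd_pow_of_dvd hPldvd φ) hdvd
    have h4 : φ ≤ el := (Nat.pow_dvd_pow_iff_le_right hPl.one_lt).mp h3
    have h5 : el * 2 ≤ el * tl := Nat.mul_le_mul_left el htl
    omega

end Helpers

/-- For the FPU chain with frequencies `ω_j = 2 sin (jπ/(2N+2))`,
`1 ≤ j ≤ N`, any two distinct frequencies are rationally independent in the weak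
sense that `k·ω_j + ω_l ≠ 0` for every rational `k` and `j ≠ l`. -/
theorem fpu_frequencies_weakly_rationally_independent
    (N : ℕ) (hN : 1 ≤ N) (j l : ℕ)
    (hj1 : 1 ≤ j) (hjN : j ≤ N) (hl1 : 1 ≤ l) (hlN : l ≤ N) (hjl : j ≠ l)
    (k : ℚ) :
    (k : ℝ) * (2 * Real.sin (j * π / (2 * N + 2)))
      + 2 * Real.sin (l * π / (2 * N + 2)) ≠ 0 := by
  intro h0
  have hπ := Real.pi_pos
  set n : ℕ := 4 * N + 4 with hndef
  have hn0 : n ≠ 0 := by omega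
  have hnpos : 0 < n := by omega
  haveI : NeZero n := ⟨hn0⟩
  have hnR : (n : ℝ) = 4 * (N : ℝ) + 4 := by rw [hndef]; push_cast; ring
  have hnRpos : (0:ℝ) < (n:ℝ) := by rw [hnR]; positivity
  have hang : ∀ a : ℕ, (a : ℝ) * π / (2 * (N:ℝ) + 2) = 2 * π * a / n := by
    intro a
    rw [hnR]
    have h2 : (2 * (N:ℝ) + 2) ≠ 0 := by positivity
    field_simp
    ring
  rw [hang j, hang l] at h0
  set sA := Real.sin (2 * π * j / n) with hsAdef
  set sB := Real.sin (2 * π * l / n) with hsBdef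
  have hbound : ∀ a : ℕ, 1 ≤ a → a ≤ N →
      0 < 2 * π * a / n ∧ 2 * π * a / n < π / 2 := by
    intro a h1 h2
    have haR : (1:ℝ) ≤ (a:ℝ) := by exact_mod_cast h1
    have haR2 : (a:ℝ) ≤ (N:ℝ) := by exact_mod_cast h2
    constructor
    · apply div_pos _ hnRpos
      nlinarith
    · rw [div_lt_iff₀ hnRpos, hnR]
      nlinarith
  obtain ⟨hA0, hA2⟩ := hbound j hj1 hjN
  obtain ⟨hB0, hB2⟩ := hbound l hl1 hlN
  have hsA : 0 < sA := Real.sin_pos_of_pos_of_lt_pi hA0 (by linarith)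
  have hsB : 0 < sB := Real.sin_pos_of_pos_of_lt_pi hB0 (by linarith)
  have hkr : (k:ℝ) * sA = -sB := by linarith
  have hkneg : k < 0 := by
    by_contra hk
    push_neg at hk
    have hk' : (0:ℝ) ≤ (k:ℝ) := by exact_mod_cast hk
    nlinarith
  set p : ℕ := k.num.natAbs with hpdef
  set q : ℕ := k.den with hqdef
  have hq0 : 0 < q := k.pos
  have hknum : k.num < 0 := Rat.num_neg.mpr hkneg
  have hp0 : 0 < p := Int.natAbs_pos.mpr hknum.ne
  have hcop : p.Coprime q := k.reduced
  have hnumcast : ((k.num : ℝ)) = -(p:ℝ) := by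
    have h1 : ((p:ℕ) : ℤ) = -k.num := by
      rw [hpdef]
      omega
    have h2 : ((p:ℕ) : ℝ) = ((-k.num : ℤ) : ℝ) := by exact_mod_cast h1
    rw [h2]
    push_cast
    ring
  have hrel : (p:ℝ) * sA = (q:ℝ) * sB := by
    have hqR : ((q:ℕ):ℝ) ≠ 0 := by positivity
    have hcast : (k:ℝ) = (k.num : ℝ) / ((q:ℕ) : ℝ) := by
      rw [Rat.cast_def]
    rw [hcast, hnumcast] at hkr
    field_simp at hkr
    linarith
  -- Complex setup
  set ζ : ℂ := Complex.exp (2 * ↑Real.pi * Complex.I / ↑n) with hζdef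
  have hζ : IsPrimitiveRoot ζ n := Complex.isPrimitiveRoot_exp n hn0
  have hζ0 : ζ ≠ 0 := Complex.exp_ne_zero _
  have hζn : ζ ^ n = 1 := hζ.pow_eq_one
  have hζabs : ‖ζ‖ = 1 := by
    rw [hζdef, Complex.norm_exp]
    have : (2 * ↑Real.pi * Complex.I / ↑n).re = 0 := by
      simp [Complex.div_re, Complex.mul_re, Complex.mul_im]
    rw [this, Real.exp_zero]
  set P : Polynomial ℚ :=
      Polynomial.C (p:ℚ) * (Polynomial.X ^ j - Polynomial.X ^ (n - j))
      - Polynomial.C (q:ℚ) * (Polynomial.X ^ l - Polynomial.X ^ (n - l)) with hPdef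
  have haev : ∀ z : ℂ, Polynomial.aeval z P
      = (p:ℂ) * (z ^ j - z ^ (n - j)) - (q:ℂ) * (z ^ l - z ^ (n - l)) := by
    intro z
    simp [hPdef]
  have hjn : j ≤ n := by omega
  have hln : l ≤ n := by omega
  have hP0 : Polynomial.aeval ζ P = 0 := by
    have key : ((p:ℝ) * (2 * sA) - (q:ℝ) * (2 * sB) : ℝ) = 0 := by linarith
    rw [hsAdef, hsBdef] at key
    rw [haev, hζdef, pow_sub_pow_eq n hn0 j hjn, pow_sub_pow_eq n hn0 l hln]
    have expand : (p:ℂ) * (((2 * Real.sin (2 * Real.pi * j / n) : ℝ) : ℂ) * Complex.I)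
        - (q:ℂ) * (((2 * Real.sin (2 * Real.pi * l / n) : ℝ) : ℂ) * Complex.I)
        = (((p:ℝ) * (2 * Real.sin (2 * Real.pi * j / n))
            - (q:ℝ) * (2 * Real.sin (2 * Real.pi * l / n)) : ℝ) : ℂ) * Complex.I := by
      push_cast
      ring
    rw [expand, key]
    simp
  have hdvdP : Polynomial.cyclotomic n ℚ ∣ P := by
    rw [Polynomial.cyclotomic_eq_minpoly_rat hζ hnpos]
    exact minpoly.dvd ℚ ζ hP0
  have perc : ∀ c : ℕ, c.Coprime n →
      (p:ℝ) * ‖1 - ζ ^ (2 * j * c)‖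
        = (q:ℝ) * ‖1 - ζ ^ (2 * l * c)‖ := by
    intro c hc
    have hprim : IsPrimitiveRoot (ζ ^ c) n := hζ.pow_of_coprime c hc
    have hcyc0 : Polynomial.aeval (ζ ^ c) (Polynomial.cyclotomic n ℚ) = 0 := by
      have hroot := hprim.isRoot_cyclotomic hnpos
      rw [Polynomial.aeval_def, ← Polynomial.eval_map, Polynomial.map_cyclotomic]
      exact hroot
    have hPc : Polynomial.aeval (ζ ^ c) P = 0 := by
      obtain ⟨R, hR⟩ := hdvdP
      rw [hR, map_mul, hcyc0, zero_mul]
    rw [haev] at hPc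
    have heq : (p:ℂ) * ((ζ^c)^j - (ζ^c)^(n-j)) = (q:ℂ) * ((ζ^c)^l - (ζ^c)^(n-l)) := by
      linear_combination hPc
    have hpow : ∀ a : ℕ, (ζ^c)^a = ζ^(a*c) := fun a => by rw [← pow_mul, mul_comm]
    rw [hpow, hpow, hpow, hpow] at heq
    have habs := congrArg norm heq
    rw [norm_mul, norm_mul, Complex.norm_natCast, Complex.norm_natCast,
      abs_trick hζ0 hζabs hζn j c hjn, abs_trick hζ0 hζabs hζn l c hln] at habs
    exact habs
  have hfin : Fintype.card (ZMod n)ˣ = n.totient := ZMod.card_units_eq_totient n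
  obtain ⟨ej, hej, hprodj⟩ := key_prod n (2*j) (by omega) hζ
  obtain ⟨el, hel, hprodl⟩ := key_prod n (2*l) (by omega) hζ
  set dj := n / n.gcd (2*j) with hdjdef
  set dl := n / n.gcd (2*l) with hdldef
  have hd3 : ∀ a : ℕ, 1 ≤ a → a ≤ N → 3 ≤ n / n.gcd (2*a) := by
    intro a h1 h2
    have hgdvd : n.gcd (2*a) ∣ n := Nat.gcd_dvd_left _ _
    have hga : n.gcd (2*a) ∣ 2*a := Nat.gcd_dvd_right _ _
    have hgle : n.gcd (2*a) ≤ 2*a := Nat.le_of_dvd (by omega) hga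
    have hmul : n.gcd (2*a) * (n / n.gcd (2*a)) = n := Nat.mul_div_cancel' hgdvd
    by_contra hcon
    push_neg at hcon
    have hle2 : n / n.gcd (2*a) ≤ 2 := by omega
    have hfinal : n.gcd (2*a) * (n / n.gcd (2*a)) ≤ n.gcd (2*a) * 2 :=
      Nat.mul_le_mul_left _ hle2
    omega
  have hdj3 : 3 ≤ dj := hdjdef ▸ hd3 j hj1 hjN
  have hdl3 : 3 ≤ dl := hdldef ▸ hd3 l hl1 hlN
  obtain ⟨Pj, hPjev, hPjcase⟩ := cyclo_eval_one_cases dj hdj3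
  obtain ⟨Pl, hPlev, hPlcase⟩ := cyclo_eval_one_cases dl hdl3
  have habsj : ∏ u : (ZMod n)ˣ, ‖1 - ζ ^ (2*j*(u : ZMod n).val)‖
      = (Pj:ℝ)^ej := by
    rw [← norm_prod, hprodj, hPjev, norm_pow, Complex.norm_natCast]
  have habsl : ∏ u : (ZMod n)ˣ, ‖1 - ζ ^ (2*l*(u : ZMod n).val)‖
      = (Pl:ℝ)^el := by
    rw [← norm_prod, hprodl, hPlev, norm_pow, Complex.norm_natCast]
  have hgrand : (p:ℝ)^(n.totient) * (Pj:ℝ)^ej = (q:ℝ)^(n.totient) * (Pl:ℝ)^el := by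
    have h1 : ∏ u : (ZMod n)ˣ, ((p:ℝ) * ‖1 - ζ ^ (2*j*(u : ZMod n).val)‖)
        = ∏ u : (ZMod n)ˣ, ((q:ℝ) * ‖1 - ζ ^ (2*l*(u : ZMod n).val)‖) :=
      Finset.prod_congr rfl (fun u _ => perc _ (ZMod.val_coe_unit_coprime u))
    rw [Finset.prod_mul_distrib, Finset.prod_mul_distrib, Finset.prod_const,
      Finset.prod_const, Finset.card_univ, hfin, habsj, habsl] at h1
    exact h1
  have hgrandN : p^(n.totient) * Pj^ej = q^(n.totient) * Pl^el := by exact_mod_cast hgrand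
  have hφpos : 0 < n.totient := Nat.totient_pos.mpr hnpos
  have htj2 := totient_ge_two dj hdj3
  have htl2 := totient_ge_two dl hdl3
  rcases Nat.lt_or_ge p 2 with hp2 | hp2
  · rcases Nat.lt_or_ge q 2 with hq2 | hq2
    · have hpeq : p = 1 := by omega
      have hqeq : q = 1 := by omega
      rw [hpeq, hqeq] at hrel
      norm_num at hrel
      have hmem1 : 2 * π * (j:ℝ) / n ∈ Set.Icc (-(π/2)) (π/2) :=
        ⟨by linarith, by linarith⟩
      have hmem2 : 2 * π * (l:ℝ) / n ∈ Set.Icc (-(π/2)) (π/2) :=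
        ⟨by linarith, by linarith⟩
      have hangeq : 2 * π * (j:ℝ) / n = 2 * π * (l:ℝ) / n := by
        apply Real.injOn_sin hmem1 hmem2
        rw [← hsAdef, ← hsBdef]
        exact hrel
      have hπ0 : (2 * π) ≠ 0 := by positivity
      have hn0R : (n:ℝ) ≠ 0 := ne_of_gt hnRpos
      field_simp at hangeq
      exact hjl (by exact_mod_cast hangeq)
    · exact finish_nt n.totient q p (Pl^el) Pj ej dj.totient hφpos hq2 hcop.symm
        hgrandN.symm hPjcase hej htj2
  · exact finish_nt n.totient p q (Pj^ej) Pl el dl.totient hφpos hp2 hcop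
      hgrandN hPlcase hel htl2
end

section
/- Define μ₁ = μ₂ = 1 and μ_n = Σ_{i+j+k=n, i,j,k≥1} μ_i μ_j μ_k for n ≥ 3, and let λ be the sequence with λ₁ = 1 and λ_n = Σ_{i+j+k=n+1} λ_i λ_j λ_k. Then μ_n ≤ λ_{n-1} for all n ≥ 2; in particular μ_n ≤ 8^{n-2}. -/
/-!
Write `C a n` for the sum of `a i * a j * a k` over `i + j + k = n`, so that `μ n = C μ n` and
`λ (n - 1) = C λ n`. As `λ` is nonnegative and nondecreasing, strong induction gives
`0 ≤ μ i ≤ λ i` for `i < n`, and monotonicity of `C` then gives `μ n ≤ λ (n - 1)`.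

For `λ n ≤ 8 ^ (n - 1)`, rescale to `a m = λ m / 8 ^ (m - 1)`, so that `8 a m = C a (m + 1)`.
Every triple with sum at most `n + 2` has entries at most `n`, so the partial sums
`S n = a 1 + ⋯ + a n` satisfy `S (n + 1) ≤ 1 + S n ^ 3 / 8`. Since `2 = 1 + 2 ^ 3 / 8`, this keeps
`S n ≤ 2`, and then `a (n + 1) = S (n + 1) - S n ≤ 1 + S n ^ 3 / 8 - S n ≤ 1`.
-/

open Finset

section CubicConv

variable {R : Type*} [CommSemiring R]

/-- The sum of `a i * a j * a k` over triples of positive integers with `i + j + k = n`. -/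
def cubicConv (a : ℕ → R) (n : ℕ) : R :=
  ∑ i ∈ Ico 1 n, ∑ j ∈ Ico 1 (n - i), a i * a j * a (n - i - j)

lemma pow_three_sum_eq_sum_product {ι : Type*} (s : Finset ι) (f : ι → R) :
    (∑ i ∈ s, f i) ^ 3 = ∑ p ∈ s ×ˢ s ×ˢ s, f p.1 * f p.2.1 * f p.2.2 := by
  rw [pow_three, sum_mul_sum, sum_mul_sum]
  simp only [mul_sum, sum_product, mul_assoc]

lemma cubicConv_add_one (a : ℕ → R) (n : ℕ) :
    cubicConv a (n + 1) =
      ∑ i ∈ Ico 1 n, ∑ j ∈ Ico 1 (n + 1 - i), a i * a j * a (n + 1 - i - j) := by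
  rcases Nat.eq_zero_or_pos n with rfl | hn
  · simp [cubicConv]
  · simp [cubicConv, sum_Ico_succ_top hn]

lemma cubicConv_mul_pow_sub_one (a : ℕ → R) (r : R) (n : ℕ) :
    cubicConv (fun i => a i * r ^ (i - 1)) n = cubicConv a n * r ^ (n - 3) := by
  simp only [cubicConv, sum_mul]
  refine sum_congr rfl fun i hi => sum_congr rfl fun j hj => ?_
  simp only [mem_Ico] at hi hj
  rw [show n - 3 = (i - 1) + (j - 1) + (n - i - j - 1) by omega, pow_add, pow_add]
  ring

variable [PartialOrder R] [IsOrderedRing R]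

lemma cubicConv_indices_mem {n i j : ℕ} (hi : i ∈ Ico 1 n) (hj : j ∈ Ico 1 (n - i)) :
    i ∈ Icc 1 (n - 2) ∧ j ∈ Icc 1 (n - 2) ∧ n - i - j ∈ Icc 1 (n - 2) := by
  simp only [mem_Ico, mem_Icc] at *
  omega

lemma cubicConv_summand_nonneg {a : ℕ → R} {n i j : ℕ} (ha : ∀ i ∈ Icc 1 (n - 2), 0 ≤ a i)
    (hi : i ∈ Ico 1 n) (hj : j ∈ Ico 1 (n - i)) : 0 ≤ a i * a j * a (n - i - j) :=
  let ⟨hi, hj, hk⟩ := cubicConv_indices_mem hi hj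
  mul_nonneg (mul_nonneg (ha _ hi) (ha _ hj)) (ha _ hk)

lemma cubicConv_nonneg {a : ℕ → R} {n : ℕ} (ha : ∀ i ∈ Icc 1 (n - 2), 0 ≤ a i) :
    0 ≤ cubicConv a n :=
  sum_nonneg fun _ hi => sum_nonneg fun _ hj => cubicConv_summand_nonneg ha hi hj

lemma cubicConv_mono {a b : ℕ → R} {n : ℕ} (ha : ∀ i ∈ Icc 1 (n - 2), 0 ≤ a i)
    (hab : ∀ i ∈ Icc 1 (n - 2), a i ≤ b i) : cubicConv a n ≤ cubicConv b n := by
  refine sum_le_sum fun i hi => sum_le_sum fun j hj => ?_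
  obtain ⟨hi, hj, hk⟩ := cubicConv_indices_mem hi hj
  have hb : ∀ i ∈ Icc 1 (n - 2), 0 ≤ b i := fun i hi => (ha i hi).trans (hab i hi)
  exact mul_le_mul (mul_le_mul (hab i hi) (hab j hj) (ha j hj) (hb i hi)) (hab _ hk) (ha _ hk)
    (mul_nonneg (hb i hi) (hb j hj))

lemma mul_mul_le_cubicConv {a : ℕ → R} {n : ℕ} (ha : ∀ i ∈ Icc 1 (n - 2), 0 ≤ a i) (hn : 3 ≤ n) :
    a 1 * a 1 * a (n - 2) ≤ cubicConv a n := by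
  have h1 : 1 ∈ Ico 1 n := by simp; omega
  calc a 1 * a 1 * a (n - 2) = a 1 * a 1 * a (n - 1 - 1) := by rw [Nat.sub_sub]
    _ ≤ ∑ j ∈ Ico 1 (n - 1), a 1 * a j * a (n - 1 - j) :=
        single_le_sum (fun _ hj => cubicConv_summand_nonneg ha h1 hj) (by simp; omega)
    _ ≤ cubicConv a n :=
        single_le_sum (fun _ hi => sum_nonneg fun _ hj => cubicConv_summand_nonneg ha hi hj) h1

lemma sum_range_cubicConv_le_pow_three {a : ℕ → R} {n : ℕ} (ha : ∀ i ∈ range n, 0 ≤ a (i + 1)) :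
    ∑ m ∈ range n, cubicConv a (m + 3) ≤ (∑ i ∈ range n, a (i + 1)) ^ 3 := by
  let e : (Σ _ : Σ _ : ℕ, ℕ, ℕ) → ℕ × ℕ × ℕ := fun x =>
    (x.1.2 - 1, x.2 - 1, x.1.1 + 2 - x.1.2 - x.2)
  rw [pow_three_sum_eq_sum_product]
  simp only [cubicConv]
  rw [sum_sigma', sum_sigma']
  set T := ((range n).sigma fun m => Ico 1 (m + 3)).sigma fun x => Ico 1 (x.1 + 3 - x.2)
  have hT : ∀ x ∈ T, x.1.2 ∈ Ico 1 (x.1.1 + 3) ∧ x.2 ∈ Ico 1 (x.1.1 + 3 - x.1.2) ∧ x.1.1 < n := by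
    intro x hx; simp only [T, mem_sigma, mem_range] at hx; exact ⟨hx.1.2, hx.2, hx.1.1⟩
  let g : ℕ × ℕ × ℕ → R := fun p => a (p.1 + 1) * a (p.2.1 + 1) * a (p.2.2 + 1)
  calc _ = ∑ x ∈ T, g (e x) := sum_congr rfl fun x hx => by
          obtain ⟨hi, hj, -⟩ := hT x hx
          simp only [mem_Ico] at hi hj
          simp only [g, e]
          rw [Nat.sub_add_cancel hi.1, Nat.sub_add_cancel hj.1,
            show x.1.1 + 2 - x.1.2 - x.2 + 1 = x.1.1 + 3 - x.1.2 - x.2 by omega]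
    _ = ∑ p ∈ T.image e, g p := by
          refine (sum_image fun x hx y hy hxy => ?_).symm
          obtain ⟨hi, hj, -⟩ := hT x hx
          obtain ⟨hi', hj', -⟩ := hT y hy
          obtain ⟨⟨m, i⟩, j⟩ := x
          obtain ⟨⟨m', i'⟩, j'⟩ := y
          simp only [mem_Ico, e, Prod.mk.injEq] at hi hj hi' hj' hxy
          obtain ⟨rfl, rfl, rfl⟩ : i = i' ∧ j = j' ∧ m = m' := by omega
          rfl
    _ ≤ _ := by
          refine sum_le_sum_of_subset_of_nonneg (fun p hp => ?_) fun p hp _ => ?_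
          · obtain ⟨x, hx, rfl⟩ := mem_image.mp hp
            obtain ⟨hi, hj, hm⟩ := hT x hx
            simp only [mem_Ico] at hi hj
            simp only [e, mem_product, mem_range]
            omega
          · simp only [mem_product] at hp
            exact mul_nonneg (mul_nonneg (ha _ hp.1) (ha _ hp.2.1)) (ha _ hp.2.2)

end CubicConv

lemma le_one_of_eight_mul_le_cubicConv {a : ℕ → ℝ} (ha : ∀ m, 1 ≤ m → 0 ≤ a m) (ha1 : a 1 ≤ 1)
    (hrec : ∀ m, 2 ≤ m → 8 * a m ≤ cubicConv a (m + 1)) {m : ℕ} (hm : 1 ≤ m) : a m ≤ 1 := by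
  set S : ℕ → ℝ := fun n => ∑ i ∈ range n, a (i + 1) with hS
  have hS_nonneg : ∀ n, 0 ≤ S n := fun n => sum_nonneg fun i _ => ha (i + 1) (by omega)
  have hS_succ : ∀ n, S (n + 1) ≤ a 1 + S n ^ 3 / 8 := by
    intro n
    have h8 : 8 * ∑ i ∈ range n, a (i + 2) ≤ S n ^ 3 :=
      calc 8 * ∑ i ∈ range n, a (i + 2) ≤ ∑ i ∈ range n, cubicConv a (i + 3) := by
            rw [mul_sum]; exact sum_le_sum fun i _ => hrec (i + 2) (by omega)
        _ ≤ S n ^ 3 := sum_range_cubicConv_le_pow_three fun i _ => ha (i + 1) (by omega)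
    simp only [hS, sum_range_succ' _ n]
    linarith
  have hS_le_two : ∀ n, S n ≤ 2 := by
    intro n
    induction n with
    | zero => simp [hS]
    | succ n ih =>
      have : S n ^ 3 ≤ 2 ^ 3 := pow_le_pow_left₀ (hS_nonneg n) ih 3
      linarith [hS_succ n]
  obtain ⟨n, rfl⟩ : ∃ n, m = n + 1 := ⟨m - 1, by omega⟩
  have hlast : a (n + 1) = S (n + 1) - S n := by simp only [hS, sum_range_succ]; ring
  have hcube : S n ^ 3 ≤ 8 * S n := by
    have hs := hS_nonneg n
    nlinarith [mul_nonneg hs (mul_nonneg (sub_nonneg.2 (hS_le_two n)) (by linarith : 0 ≤ 2 + S n))]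
  linarith [hS_succ n]

section ShiftedCubic

variable {lam : ℕ → ℝ} (hl1 : lam 1 = 1) (hlrec : ∀ n, 2 ≤ n → lam n = cubicConv lam (n + 1))
include hl1 hlrec

lemma lam_nonneg {n : ℕ} (hn : 1 ≤ n) : 0 ≤ lam n := by
  induction n using Nat.strong_induction_on with
  | _ n ih =>
    rcases hn.eq_or_lt with rfl | hn
    · rw [hl1]; exact zero_le_one
    · rw [hlrec n hn]
      exact cubicConv_nonneg fun i hi => ih i (by simp at hi; omega) (mem_Icc.1 hi).1

lemma lam_pred_le {n : ℕ} (hn : 2 ≤ n) : lam (n - 1) ≤ lam n := by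
  have h := mul_mul_le_cubicConv (a := lam) (n := n + 1)
    (fun i hi => lam_nonneg hl1 hlrec (mem_Icc.1 hi).1) (by omega)
  rwa [hl1, one_mul, one_mul, Nat.add_sub_add_right, ← hlrec n hn] at h

lemma lam_le_eight_pow {n : ℕ} (hn : 1 ≤ n) : lam n ≤ 8 ^ (n - 1) := by
  have hrec : ∀ m, 2 ≤ m → 8 * (lam m * 8⁻¹ ^ (m - 1)) ≤
      cubicConv (fun i => lam i * 8⁻¹ ^ (i - 1)) (m + 1) := by
    intro m hm
    rw [cubicConv_mul_pow_sub_one, ← hlrec m hm, show m + 1 - 3 = m - 2 by omega,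
      show m - 1 = m - 2 + 1 by omega, pow_succ]
    exact (by ring : _ = _).le
  have h := le_one_of_eight_mul_le_cubicConv
    (fun m hm => mul_nonneg (lam_nonneg hl1 hlrec hm) (by positivity)) (by simp [hl1]) hrec hn
  rwa [inv_pow, ← div_eq_mul_inv, div_le_one (by positivity)] at h

end ShiftedCubic

lemma nonneg_and_le_pred_of_cubicConv {μ lam : ℕ → ℝ} (hμ1 : μ 1 = 1) (hμ2 : μ 2 = 1)
    (hμrec : ∀ n, 3 ≤ n → μ n = cubicConv μ n) (hl1 : lam 1 = 1)
    (hlrec : ∀ n, 2 ≤ n → lam n = cubicConv lam (n + 1)) {n : ℕ} (hn : 2 ≤ n) :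
    0 ≤ μ n ∧ μ n ≤ lam (n - 1) := by
  induction n using Nat.strong_induction_on with
  | _ n ih =>
    rcases hn.eq_or_lt with rfl | hn
    · simp [hμ2, hl1]
    have hsmall : ∀ i ∈ Icc 1 (n - 2), 0 ≤ μ i ∧ μ i ≤ lam i := by
      intro i hi
      rcases (mem_Icc.1 hi).1.eq_or_lt with rfl | hi1
      · simp [hμ1, hl1]
      · obtain ⟨h0, hle⟩ := ih i (by simp at hi; omega) hi1
        exact ⟨h0, hle.trans (lam_pred_le hl1 hlrec hi1)⟩
    rw [hμrec n hn, show lam (n - 1) = cubicConv lam n by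
      rw [hlrec (n - 1) (by omega), Nat.sub_add_cancel (by omega)]]
    exact ⟨cubicConv_nonneg fun i hi => (hsmall i hi).1,
      cubicConv_mono (fun i hi => (hsmall i hi).1) fun i hi => (hsmall i hi).2⟩

/-- for `μ₁ = μ₂ = 1`, `μ_n = Σ_{i+j+k=n} μ_i μ_j μ_k` and the shifted
cubic sequence `λ₁ = 1`, `λ_n = Σ_{i+j+k=n+1} λ_i λ_j λ_k`, one has `μ_n ≤ λ_{n-1}`,
in particular `μ_n ≤ 8^{n-2}`. -/
theorem mu_le_shifted_cubic_sequence
    (μ lam : ℕ → ℝ)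
    (hμ1 : μ 1 = 1) (hμ2 : μ 2 = 1)
    (hμrec : ∀ n, 3 ≤ n → μ n =
      ∑ i ∈ Finset.Ico 1 n, ∑ j ∈ Finset.Ico 1 (n - i),
        μ i * μ j * μ (n - i - j))
    (hl1 : lam 1 = 1)
    (hlrec : ∀ n, 2 ≤ n → lam n =
      ∑ i ∈ Finset.Ico 1 n, ∑ j ∈ Finset.Ico 1 (n + 1 - i),
        lam i * lam j * lam (n + 1 - i - j)) :
    ∀ n, 2 ≤ n → μ n ≤ lam (n - 1) ∧ μ n ≤ 8 ^ (n - 2) := by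
  have hlrec' : ∀ n, 2 ≤ n → lam n = cubicConv lam (n + 1) := fun n hn =>
    (hlrec n hn).trans (cubicConv_add_one lam n).symm
  intro n hn
  have hμlam := (nonneg_and_le_pred_of_cubicConv hμ1 hμ2 hμrec hl1 hlrec' hn).2
  refine ⟨hμlam, hμlam.trans ?_⟩
  simpa only [Nat.sub_sub] using lam_le_eight_pow hl1 hlrec' (n := n - 1) (by omega)
end

section
/- Cascade closure for the α-model: let q₀, N with 1 ≤ q₀ ≤ N, and suppose for indices l, m the folded modes satisfy q̄_l = |l q₀ − L_l(2N+2)| and q̄_m = |m q₀ − L_m(2N+2)| for integers L_l, L_m with q̄_l, q̄_m ∈ [1,N]. If q ∈ [1,N] satisfies q ± q̄_l ± q̄_m ∈ {0, 2N+2} for some choice of signs, then q is congruent to ±(l+m)q₀ or ±(l−m)q₀ modulo 2N+2; hence 2|sin(qπ/(2N+2))| equals 2|sin((l+m)q₀π/(2N+2))| or 2|sin((l−m)q₀π/(2N+2))|. -/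
/-!
Modulo `D = 2N+2` each folded mode is `±` its unfolded mode, so the selection condition gives
`q ≡ ±l q₀ ± m q₀`, and two signs always combine into `ε (l + m)` or `ε (l - m)` with `ε = ±1`.
The frequencies then agree because `|sin (a π / D)|` only depends on `±a` modulo `D`.
-/

open Real

namespace Int

lemma exists_isUnit_abs_eq_mul (x : ℤ) : ∃ u : ℤ, IsUnit u ∧ |x| = u * x := by
  rcases abs_choice x with h | h
  · exact ⟨1, isUnit_one, by rw [h, one_mul]⟩
  · exact ⟨-1, isUnit_one.neg, by rw [h, neg_one_mul]⟩

lemma exists_isUnit_abs_sub_mul_modEq (x L D : ℤ) :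
    ∃ u : ℤ, IsUnit u ∧ |x - L * D| ≡ u * x [ZMOD D] := by
  obtain ⟨u, hu, h⟩ := exists_isUnit_abs_eq_mul (x - L * D)
  refine ⟨u, hu, ?_⟩
  rw [h, Int.modEq_iff_dvd]
  exact ⟨u * L, by ring⟩

lemma exists_isUnit_mul_add_mul_eq {s t : ℤ} (hs : IsUnit s) (ht : IsUnit t) (a b : ℤ) :
    ∃ ε : ℤ, IsUnit ε ∧ (s * a + t * b = ε * (a + b) ∨ s * a + t * b = ε * (a - b)) := by
  refine ⟨s, hs, ?_⟩
  rcases isUnit_eq_or_eq_neg ht hs with rfl | rfl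
  · left; ring
  · right; ring

end Int

lemma Real.abs_sin_int_mul_pi_div_eq_of_modEq {D a b ε : ℤ} (hε : IsUnit ε)
    (h : a ≡ ε * b [ZMOD D]) : |sin (a * π / D)| = |sin (b * π / D)| := by
  rcases eq_or_ne D 0 with rfl | hD
  · simp
  obtain ⟨k, hk⟩ := Int.modEq_iff_dvd.mp h.symm
  have ha : (a : ℝ) = ε * b + D * k := by exact_mod_cast (by linarith : a = ε * b + D * k)
  have harg : (a : ℝ) * π / D = ε * (b * π / D) + k * π := by
    rw [ha]; field_simp
  rw [harg, sin_add_int_mul_pi, abs_mul, abs_neg_one_zpow, one_mul]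
  rcases Int.isUnit_iff.mp hε with rfl | rfl <;> simp

theorem cascade_closure_alpha_general
    (N q₀ : ℕ)
    (l m q Ll Lm qbl qbm : ℤ)
    (hqbl : qbl = |l * (q₀ : ℤ) - Ll * (2 * (N : ℤ) + 2)|)
    (hqbm : qbm = |m * (q₀ : ℤ) - Lm * (2 * (N : ℤ) + 2)|)
    (hsel : ∃ σ₁ σ₂ : ℤ, (σ₁ = 1 ∨ σ₁ = -1) ∧ (σ₂ = 1 ∨ σ₂ = -1) ∧
      (q + σ₁ * qbl + σ₂ * qbm = 0 ∨ q + σ₁ * qbl + σ₂ * qbm = 2 * (N : ℤ) + 2)) :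
    (∃ ε : ℤ, (ε = 1 ∨ ε = -1) ∧
      ((2 * (N : ℤ) + 2) ∣ q - ε * (l + m) * (q₀ : ℤ) ∨
       (2 * (N : ℤ) + 2) ∣ q - ε * (l - m) * (q₀ : ℤ))) ∧
    (2 * |Real.sin ((q : ℝ) * π / (2 * N + 2))|
        = 2 * |Real.sin (((l + m : ℤ) : ℝ) * q₀ * π / (2 * N + 2))| ∨
     2 * |Real.sin ((q : ℝ) * π / (2 * N + 2))|
        = 2 * |Real.sin (((l - m : ℤ) : ℝ) * q₀ * π / (2 * N + 2))|) := by
  obtain ⟨σ₁, σ₂, hσ₁, hσ₂, hsum⟩ := hsel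
  set D : ℤ := 2 * (N : ℤ) + 2 with hD
  obtain ⟨u₁, hu₁, hl⟩ := Int.exists_isUnit_abs_sub_mul_modEq (l * q₀) Ll D
  obtain ⟨u₂, hu₂, hm⟩ := Int.exists_isUnit_abs_sub_mul_modEq (m * q₀) Lm D
  subst hqbl hqbm
  have hsel₀ : q + σ₁ * |l * q₀ - Ll * D| + σ₂ * |m * q₀ - Lm * D| ≡ 0 [ZMOD D] := by
    rcases hsum with h | h <;> simp [h, Int.ModEq]
  have hq : q ≡ (-σ₁ * u₁) * (l * q₀) + (-σ₂ * u₂) * (m * q₀) [ZMOD D] :=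
    calc q = (q + σ₁ * |l * q₀ - Ll * D| + σ₂ * |m * q₀ - Lm * D|)
          - σ₁ * |l * q₀ - Ll * D| - σ₂ * |m * q₀ - Lm * D| := by ring
      _ ≡ 0 - σ₁ * (u₁ * (l * q₀)) - σ₂ * (u₂ * (m * q₀)) [ZMOD D] := by gcongr
      _ = (-σ₁ * u₁) * (l * q₀) + (-σ₂ * u₂) * (m * q₀) := by ring
  obtain ⟨ε, hε, hcases⟩ := Int.exists_isUnit_mul_add_mul_eq
    ((Int.isUnit_iff.mpr hσ₁).neg.mul hu₁) ((Int.isUnit_iff.mpr hσ₂).neg.mul hu₂) (l * q₀) (m * q₀)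
  have key : q ≡ ε * ((l + m) * q₀) [ZMOD D] ∨ q ≡ ε * ((l - m) * q₀) [ZMOD D] :=
    hcases.imp (fun h => hq.trans (by rw [h, add_mul])) (fun h => hq.trans (by rw [h, sub_mul]))
  have hsin (c : ℤ) (hc : q ≡ ε * (c * q₀) [ZMOD D]) :
      2 * |sin (q * π / (2 * N + 2))| = 2 * |sin ((c : ℝ) * q₀ * π / (2 * N + 2))| := by
    have := Real.abs_sin_int_mul_pi_div_eq_of_modEq hε hc
    push_cast [hD] at this
    rw [this]
  refine ⟨⟨ε, Int.isUnit_iff.mp hε, ?_⟩, key.imp (hsin _) (hsin _)⟩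
  simpa only [mul_assoc] using key.imp (·.symm.dvd) (·.symm.dvd)

/-- cascade closure for the α-model. If the folded modes
`q̄_l = |l q₀ − L_l (2N+2)|`, `q̄_m = |m q₀ − L_m (2N+2)|` lie in `[1,N]` and
`q ∈ [1,N]` satisfies the selection condition `q ± q̄_l ± q̄_m ∈ {0, 2N+2}`,
then `q ≡ ±(l+m)q₀` or `q ≡ ±(l−m)q₀ (mod 2N+2)`, hence `q` has frequency
`2|sin((l+m)q₀π/(2N+2))|` or `2|sin((l−m)q₀π/(2N+2))|`. -/
theorem cascade_closure_alpha
    (N q₀ : ℕ) (hN : 1 ≤ N) (hq01 : 1 ≤ q₀) (hq0N : q₀ ≤ N)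
    (l m q Ll Lm qbl qbm : ℤ)
    (hqbl : qbl = |l * (q₀ : ℤ) - Ll * (2 * (N : ℤ) + 2)|)
    (hqbl1 : 1 ≤ qbl) (hqblN : qbl ≤ (N : ℤ))
    (hqbm : qbm = |m * (q₀ : ℤ) - Lm * (2 * (N : ℤ) + 2)|)
    (hqbm1 : 1 ≤ qbm) (hqbmN : qbm ≤ (N : ℤ))
    (hq1 : 1 ≤ q) (hqN : q ≤ (N : ℤ))
    (hsel : ∃ σ₁ σ₂ : ℤ, (σ₁ = 1 ∨ σ₁ = -1) ∧ (σ₂ = 1 ∨ σ₂ = -1) ∧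
      (q + σ₁ * qbl + σ₂ * qbm = 0 ∨ q + σ₁ * qbl + σ₂ * qbm = 2 * (N : ℤ) + 2)) :
    (∃ ε : ℤ, (ε = 1 ∨ ε = -1) ∧
      ((2 * (N : ℤ) + 2) ∣ q - ε * (l + m) * (q₀ : ℤ) ∨
       (2 * (N : ℤ) + 2) ∣ q - ε * (l - m) * (q₀ : ℤ))) ∧
    (2 * |Real.sin ((q : ℝ) * π / (2 * N + 2))|
        = 2 * |Real.sin (((l + m : ℤ) : ℝ) * q₀ * π / (2 * N + 2))| ∨
     2 * |Real.sin ((q : ℝ) * π / (2 * N + 2))|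
        = 2 * |Real.sin (((l - m : ℤ) : ℝ) * q₀ * π / (2 * N + 2))|) :=
  cascade_closure_alpha_general N q₀ l m q Ll Lm qbl qbm hqbl hqbm hsel
end

section
/- Fixed-point characterization (Proposition on symmetries): in the periodic FPU chain of 2N+2 sites with translation R: (Q_j) ↦ (Q_{j+1}) acting on mode indices and reflection-type symmetry S: (Q_j, P_j) ↦ (−Q_{2N+2−j}, −P_{2N+2−j}), for any divisor structure κ₀ = (2N+2)/g₀ with g₀ = gcd(q₀, 2N+2), the set Fix(R^{κ₀}) ∩ Fix(S) of mode indices equals {j ∈ [1,N] : g₀ ∣ j}, and this set coincides with the set of folded modes {q̄_k : k ≥ 1} of the q₀-breather cascade. -/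
/-! The divisibility set is invariant under reduction modulo `2N+2` and under `s ↦ 2N+2 - s`,
because `g₀` divides `2N+2`; so every folded multiple of `q₀` lies in it. Conversely, Bézout
writes `g₀ = a q₀ + b (2N+2)`, so every multiple `t g₀` is congruent to `(a t) q₀` modulo `2N+2`,
and folding does not move a residue that already lies in `[1, N]`. -/

namespace Nat

theorem exists_pos_mul_modEq_of_gcd_dvd {q M j : ℕ} (hM : 0 < M) (h : q.gcd M ∣ j) :
    ∃ k, 0 < k ∧ k * q ≡ j [MOD M] := by
  have : NeZero M := ⟨hM.ne'⟩
  obtain ⟨t, rfl⟩ := h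
  have bezout : ((q.gcd M : ℤ) : ZMod M) = q * (q.gcdA M : ZMod M) := by
    rw [gcd_eq_gcd_ab]; push_cast; rw [ZMod.natCast_self]; ring
  refine ⟨((q.gcdA M : ZMod M) * t).val + M, by omega, ?_⟩
  rw [← ZMod.natCast_eq_natCast_iff]
  push_cast at bezout ⊢
  rw [ZMod.natCast_val, ZMod.cast_id, ZMod.natCast_self, bezout]
  ring

end Nat

def foldMod (M s : ℕ) : ℕ :=
  if s % M ≤ M / 2 then s % M else M - s % M

theorem foldMod_eq_of_modEq {M s j : ℕ} (h : s ≡ j [MOD M]) (hj : j ≤ M / 2) :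
    foldMod M s = j := by
  have hjmod : j % M = j := by
    rcases M.eq_zero_or_pos with rfl | hM
    · exact Nat.mod_zero j
    · exact Nat.mod_eq_of_lt (by omega)
  rw [foldMod, h, hjmod, if_pos hj]

theorem dvd_foldMod {g M s : ℕ} (hM : g ∣ M) (hs : g ∣ s) : g ∣ foldMod M s := by
  have hmod : g ∣ s % M := (Nat.dvd_mod_iff hM).mpr hs
  unfold foldMod
  split_ifs
  · exact hmod
  · exact Nat.dvd_sub hM hmod

theorem cascade_modes_eq_divisibility_set_general
    (N q₀ : ℕ)
    (g₀ : ℕ) (hg : g₀ = Nat.gcd q₀ (2 * N + 2))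
    (fold : ℕ → ℕ)
    (hfold : ∀ s, fold s = if s % (2 * N + 2) ≤ N + 1
      then s % (2 * N + 2) else 2 * N + 2 - s % (2 * N + 2)) :
    {j : ℕ | 1 ≤ j ∧ j ≤ N ∧ g₀ ∣ j}
      = {j : ℕ | 1 ≤ j ∧ j ≤ N ∧ ∃ k, 1 ≤ k ∧ fold (k * q₀) = j} := by
  have hhalf : (2 * N + 2) / 2 = N + 1 := by omega
  obtain rfl : fold = foldMod (2 * N + 2) := funext fun s => by rw [hfold, foldMod, hhalf]
  subst hg
  ext j
  refine and_congr_right fun _ => and_congr_right fun hjN => ⟨fun hdvd => ?_, ?_⟩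
  · obtain ⟨k, hk, hmod⟩ := Nat.exists_pos_mul_modEq_of_gcd_dvd (by omega) hdvd
    exact ⟨k, hk, foldMod_eq_of_modEq hmod (by omega)⟩
  · rintro ⟨k, -, rfl⟩
    exact dvd_foldMod (Nat.gcd_dvd_right _ _) (dvd_mul_of_dvd_right (Nat.gcd_dvd_left _ _) k)

/-- fixed-point characterization of the q-breather cascade. With
`g₀ = gcd(q₀, 2N+2)`, the set of mode indices of `Fix(R^{κ₀}) ∩ Fix(S)`, namely
`{j ∈ [1,N] : g₀ ∣ j}`, coincides with the set of folded cascade modes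
`{fold(kq₀) : k ≥ 1}` of the `q₀`-breather, where `fold` folds an integer
into `[0, N+1]` modulo `2N+2` up to sign. -/
theorem cascade_modes_eq_divisibility_set
    (N q₀ : ℕ) (hN : 1 ≤ N) (hq1 : 1 ≤ q₀) (hqN : q₀ ≤ N)
    (g₀ : ℕ) (hg : g₀ = Nat.gcd q₀ (2 * N + 2))
    (fold : ℕ → ℕ)
    (hfold : ∀ s, fold s = if s % (2 * N + 2) ≤ N + 1
      then s % (2 * N + 2) else 2 * N + 2 - s % (2 * N + 2)) :
    {j : ℕ | 1 ≤ j ∧ j ≤ N ∧ g₀ ∣ j}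
      = {j : ℕ | 1 ≤ j ∧ j ≤ N ∧ ∃ k, 1 ≤ k ∧ fold (k * q₀) = j} :=
  cascade_modes_eq_divisibility_set_general N q₀ g₀ hg fold hfold
end
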